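/- For a profile curve solving dr/dφ = -r cos φ/(r u + sin φ), du/dφ = -r sin φ/(r u + sin φ) with vertical point at φ = π/2 at radius σ, the washer-method volume of the region of revolution from angle φ₀ down to angle φ admits the closed form V(φ) = π(r(φ)² − ρ₀²) u(φ) + 2π(r(φ) sin φ − ρ₀ sin φ₀), where ρ₀ = r(φ₀) and the identity d/dr (r sin φ) = -r u is used. -/
import Mathlib


open Real intervalIntegral

/-- The washer-method volume `V(φ) = π ρ₀² (u₀ - u(φ)) - π ∫ r² du` of the region of
revolution admits the closed form
`V(φ) = π (r(φ)² - ρ₀²) u(φ) + 2π (r(φ) sin φ - ρ₀ sin φ₀)`,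
along a solution of the capillary ODE system with `r(φ₀) = ρ₀`, `u(φ₀) = u₀`. -/
theorem stmt_4 (φ φ₀ ρ₀ u₀ : ℝ) (hφ : φ ≤ φ₀) (r u : ℝ → ℝ)
    (hpos : ∀ t ∈ Set.Icc φ φ₀, 0 < r t ∧ 0 < u t ∧ 0 < r t * u t + Real.sin t)
    (hr' : ∀ t ∈ Set.Icc φ φ₀,
      HasDerivAt r (-(r t) * Real.cos t / (r t * u t + Real.sin t)) t)
    (hu' : ∀ t ∈ Set.Icc φ φ₀,
      HasDerivAt u (-(r t) * Real.sin t / (r t * u t + Real.sin t)) t)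
    (hrc : ContinuousOn r (Set.Icc φ φ₀)) (huc : ContinuousOn u (Set.Icc φ φ₀))
    (hρ : r φ₀ = ρ₀) (hu0 : u φ₀ = u₀) :
    Real.pi * ρ₀ ^ 2 * (u₀ - u φ)
      - Real.pi * ∫ t in φ..φ₀, (r t) ^ 2 * (-(r t) * Real.sin t / (r t * u t + Real.sin t))
      = Real.pi * ((r φ) ^ 2 - ρ₀ ^ 2) * u φ
        + 2 * Real.pi * (r φ * Real.sin φ - ρ₀ * Real.sin φ₀) := by
  set F : ℝ → ℝ := fun t => r t ^ 2 * u t + 2 * (r t * Real.sin t) with hF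
  have hFd : ∀ t ∈ Set.uIcc φ φ₀, HasDerivAt F
      (r t ^ 2 * (-(r t) * Real.sin t / (r t * u t + Real.sin t))) t := by
    intro t ht
    rw [Set.uIcc_of_le hφ] at ht
    obtain ⟨hr0, hu0', hΔ⟩ := hpos t ht
    have hΔ' : r t * u t + Real.sin t ≠ 0 := ne_of_gt hΔ
    have h1 : HasDerivAt F
        ((2 * r t ^ 1 * (-(r t) * Real.cos t / (r t * u t + Real.sin t))) * u t
          + r t ^ 2 * (-(r t) * Real.sin t / (r t * u t + Real.sin t))
          + 2 * ((-(r t) * Real.cos t / (r t * u t + Real.sin t)) * Real.sin t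
            + r t * Real.cos t)) t := by
      exact (((hr' t ht).pow 2).mul (hu' t ht)).add
        ((((hr' t ht).mul (Real.hasDerivAt_sin t))).const_mul 2)
    convert h1 using 1
    field_simp
    ring
  have hcont : ContinuousOn
      (fun t => r t ^ 2 * (-(r t) * Real.sin t / (r t * u t + Real.sin t)))
      (Set.Icc φ φ₀) := by
    apply ((hrc.pow 2).mul ((hrc.neg.mul Real.continuous_sin.continuousOn).div
      ((hrc.mul huc).add Real.continuous_sin.continuousOn) ?_))
    intro t ht
    exact ne_of_gt (hpos t ht).2.2
  have hint := intervalIntegral.integral_eq_sub_of_hasDerivAt hFd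
    ((hcont.mono (by rw [Set.uIcc_of_le hφ])).intervalIntegrable)
  rw [hint]
  simp only [hF, hρ, hu0]
  ring
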